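/- arXiv:1511.00457 — 4 statements merged into one kernel-verified Lean document; each statement's English description precedes it below -/
import Mathlib

section
/- Assigning to each edge of the flip graph Γ_n its flip element yields a well-defined proper edge coloring: adjacent edges of Γ_n receive different colors, and the color of an edge does not depend on which endpoint is used to compute it. -/
/-! A flip is an involution on lists of nonempty pairwise disjoint blocks and keeps its element
flippable, so for an edge with `τ = F(σ,x)` and `σ = F(τ,y)` we get `F(τ,x) = σ = F(τ,y)`: both
claims reduce to injectivity of `x ↦ F(σ,x)` on `F(σ)`. For that, look at the first block `A`
containing `x` or `y`. A flip at `x ∈ A` leaves the earlier blocks alone and changes `A`: it becomes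
`{x} ≠ A` if `2 ≤ |A|`, and if `A = {x}` it is replaced by `{x} ∪ B` for the next block `B`, which
is disjoint from `A` (flippability excludes the one flip that changes nothing, at a last singleton
block). Hence `x` and `y` both lie in `A`, and then either `A = {x} = {y}` or the new first blocks
`{x}` and `{y}` agree. -/

/-- A full `[n]`-tuple: an ordered partition of `Fin n` into pairwise disjoint
nonempty blocks covering everything. -/
def IsFullTuple (n : ℕ) (l : List (Finset (Fin n))) : Prop :=
  (∀ A ∈ l, A.Nonempty) ∧ l.Pairwise Disjoint ∧ l.foldr (· ∪ ·) ∅ = Finset.univ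

/-- The flippable set `F(σ)`: everything, unless the last block is a singleton,
in which case that singleton is excluded. -/
def flippable (n : ℕ) (l : List (Finset (Fin n))) : Finset (Fin n) :=
  match l.getLast? with
  | some A => if A.card = 1 then Finset.univ \ A else Finset.univ
  | none => Finset.univ

/-- The flip operation `F(σ, x)`: split `x` off from its block if that block has
at least two elements; otherwise merge the singleton block `{x}` into the next block. -/
def cflip {n : ℕ} (x : Fin n) : List (Finset (Fin n)) → List (Finset (Fin n))
  | [] => []
  | A :: rest =>
      if x ∈ A then
        if 2 ≤ A.card then {x} :: A.erase x :: rest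
        else
          match rest with
          | [] => A :: rest
          | B :: rest' => insert x B :: rest'
      else A :: cflip x rest

open Finset

section

variable {n : ℕ} {x y : Fin n} {A B : Finset (Fin n)} {l rest : List (Finset (Fin n))}

lemma eq_singleton_of_mem_of_not_two_le_card (hx : x ∈ A) (hA : ¬ 2 ≤ #A) : A = {x} :=
  eq_singleton_iff_unique_mem.mpr ⟨hx, fun y hy => card_le_one.mp (by omega) y hy x hx⟩

lemma two_le_card_insert (hB : B.Nonempty) (hxB : x ∉ B) : 2 ≤ #(insert x B) := by
  rw [card_insert_of_notMem hxB]
  have := hB.card_pos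
  omega

lemma notMem_of_pairwise_disjoint_singleton_cons (h : ({x} :: B :: rest).Pairwise Disjoint) :
    x ∉ B :=
  disjoint_singleton_left.mp (List.rel_of_pairwise_cons h List.mem_cons_self)

lemma flippable_cons_cons : flippable n (A :: B :: rest) = flippable n (B :: rest) := by
  simp only [flippable, List.getLast?_cons_cons]

lemma mem_flippable_singleton : x ∈ flippable n [A] ↔ A ≠ {x} := by
  simp only [flippable, List.getLast?_singleton]
  split_ifs with hA
  · obtain ⟨a, rfl⟩ := card_eq_one.mp hA
    simp [eq_comm]
  · simp only [mem_univ, ne_eq, true_iff]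
    rintro rfl
    simp at hA

lemma cflip_cons_of_notMem (hxA : x ∉ A) : cflip x (A :: rest) = A :: cflip x rest := by
  simp [cflip, hxA]

lemma cflip_cons_of_two_le_card (hxA : x ∈ A) (hA : 2 ≤ #A) :
    cflip x (A :: rest) = {x} :: A.erase x :: rest := by
  simp [cflip, hxA, hA]

lemma cflip_singleton_nil : cflip x [{x}] = [{x}] := by
  simp [cflip]

lemma cflip_singleton_cons : cflip x ({x} :: B :: rest) = insert x B :: rest := by
  simp [cflip]

lemma cflip_cons_ne_nil : cflip x (A :: rest) ≠ [] := by
  unfold cflip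
  split_ifs
  · simp
  · cases rest <;> simp
  · simp

theorem cflip_cflip (hne : ∀ C ∈ l, C.Nonempty) (hdisj : l.Pairwise Disjoint) :
    cflip x (cflip x l) = l := by
  induction l with
  | nil => rfl
  | cons A rest ih =>
    by_cases hxA : x ∈ A
    · by_cases hA : 2 ≤ #A
      · rw [cflip_cons_of_two_le_card hxA hA, cflip_singleton_cons, insert_erase hxA]
      · obtain rfl := eq_singleton_of_mem_of_not_two_le_card hxA hA
        cases rest with
        | nil => simp only [cflip_singleton_nil]
        | cons B rest =>
          have hxB := notMem_of_pairwise_disjoint_singleton_cons hdisj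
          rw [cflip_singleton_cons, cflip_cons_of_two_le_card (mem_insert_self x B)
            (two_le_card_insert (hne B (by simp)) hxB), erase_insert hxB]
    · rw [cflip_cons_of_notMem hxA, cflip_cons_of_notMem hxA,
        ih (fun C hC => hne C (List.mem_cons_of_mem A hC)) hdisj.of_cons]

theorem mem_flippable_cflip (hne : ∀ C ∈ l, C.Nonempty) (hdisj : l.Pairwise Disjoint)
    (hx : x ∈ flippable n l) : x ∈ flippable n (cflip x l) := by
  induction l with
  | nil => exact hx
  | cons A rest ih =>
    by_cases hxA : x ∈ A
    · by_cases hA : 2 ≤ #A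
      · rw [cflip_cons_of_two_le_card hxA hA, flippable_cons_cons]
        cases rest with
        | nil => simp [mem_flippable_singleton, eq_singleton_iff_unique_mem]
        | cons B rest => rwa [flippable_cons_cons] at hx ⊢
      · obtain rfl := eq_singleton_of_mem_of_not_two_le_card hxA hA
        rcases rest with _ | ⟨B, _ | ⟨C, rest⟩⟩
        · simp [mem_flippable_singleton] at hx
        · rw [cflip_singleton_cons, mem_flippable_singleton]
          intro h
          simpa [h] using two_le_card_insert (hne B (by simp))
            (notMem_of_pairwise_disjoint_singleton_cons hdisj)
        · rw [cflip_singleton_cons, flippable_cons_cons]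
          rwa [flippable_cons_cons, flippable_cons_cons] at hx
    · rw [cflip_cons_of_notMem hxA]
      cases rest with
      | nil => exact hx
      | cons B rest =>
        obtain ⟨C, cs, hcs⟩ : ∃ C cs, cflip x (B :: rest) = C :: cs :=
          List.exists_cons_of_ne_nil cflip_cons_ne_nil
        rw [hcs, flippable_cons_cons, ← hcs]
        exact ih (fun C hC => hne C (List.mem_cons_of_mem A hC)) hdisj.of_cons
          (flippable_cons_cons ▸ hx)

theorem cflip_cons_ne_cons_of_mem (hne : ∀ C ∈ A :: rest, C.Nonempty)
    (hdisj : (A :: rest).Pairwise Disjoint) (hxA : x ∈ A) (hx : x ∈ flippable n (A :: rest))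
    (l : List (Finset (Fin n))) : cflip x (A :: rest) ≠ A :: l := by
  by_cases hA : 2 ≤ #A
  · rw [cflip_cons_of_two_le_card hxA hA, Ne, List.cons.injEq]
    rintro ⟨rfl, -⟩
    simp at hA
  · obtain rfl := eq_singleton_of_mem_of_not_two_le_card hxA hA
    cases rest with
    | nil => simp [mem_flippable_singleton] at hx
    | cons B rest =>
      rw [cflip_singleton_cons, Ne, List.cons.injEq]
      rintro ⟨h, -⟩
      simpa [h] using two_le_card_insert (hne B (by simp))
        (notMem_of_pairwise_disjoint_singleton_cons hdisj)

theorem eq_of_cflip_eq (hne : ∀ C ∈ l, C.Nonempty) (hdisj : l.Pairwise Disjoint)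
    (hxl : x ∈ l.foldr (· ∪ ·) ∅) (hyl : y ∈ l.foldr (· ∪ ·) ∅)
    (hx : x ∈ flippable n l) (hy : y ∈ flippable n l) (h : cflip x l = cflip y l) : x = y := by
  induction l with
  | nil => simp at hxl
  | cons A rest ih =>
    by_cases hxA : x ∈ A <;> by_cases hyA : y ∈ A
    · by_cases hA : 2 ≤ #A
      · rw [cflip_cons_of_two_le_card hxA hA, cflip_cons_of_two_le_card hyA hA] at h
        exact singleton_inj.mp (List.cons.inj h).1
      · exact card_le_one.mp (by omega) x hxA y hyA
    · rw [cflip_cons_of_notMem hyA] at h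
      exact absurd h (cflip_cons_ne_cons_of_mem hne hdisj hxA hx _)
    · rw [cflip_cons_of_notMem hxA] at h
      exact absurd h.symm (cflip_cons_ne_cons_of_mem hne hdisj hyA hy _)
    · rw [cflip_cons_of_notMem hxA, cflip_cons_of_notMem hyA, List.cons.injEq] at h
      cases rest with
      | nil => simp_all
      | cons B rest =>
        rw [flippable_cons_cons] at hx hy
        exact ih (fun C hC => hne C (List.mem_cons_of_mem A hC)) hdisj.of_cons
          (by simpa [hxA] using hxl) (by simpa [hyA] using hyl) hx hy h.2

theorem IsFullTuple.injOn_cflip (hl : IsFullTuple n l) :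
    Set.InjOn (cflip · l) (flippable n l) := by
  obtain ⟨hne, hdisj, hcover⟩ := hl
  exact fun x hx y hy => eq_of_cflip_eq hne hdisj (by simp [hcover]) (by simp [hcover]) hx hy

end


/-- Assigning to each edge of the flip graph `Γ_n` its flip element is a
well-defined proper edge coloring: (1) the color of an edge does not depend on
which endpoint one uses to compute it (if `τ = F(σ,x)` and `σ = F(τ,y)` then
`x = y`), and (2) distinct flips at a common vertex yield distinct edges, so any
two distinct edges sharing a vertex receive distinct colors. -/
theorem flip_edge_coloring (n : ℕ) (σ : List (Finset (Fin n))) (hσ : IsFullTuple n σ) :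
    (∀ x ∈ flippable n σ, ∀ y ∈ flippable n σ, cflip x σ = cflip y σ → x = y) ∧
    (∀ τ : List (Finset (Fin n)), IsFullTuple n τ →
      ∀ x ∈ flippable n σ, ∀ y ∈ flippable n τ,
        cflip x σ = τ → cflip y τ = σ → x = y) := by
  refine ⟨fun x hx y hy => hσ.injOn_cflip hx hy, ?_⟩
  rintro τ hτ x hx y hy rfl hyσ
  refine hτ.injOn_cflip (mem_flippable_cflip hσ.1 hσ.2.1 hx) hy ?_
  change cflip x (cflip x σ) = cflip y (cflip x σ)
  rw [cflip_cflip hσ.1 hσ.2.1, hyσ]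
end

section
/- Let σ be a full [n]-tuple, V ⊆ [n], and x ∈ F(σ) with x ∉ V. Then the V-prefix is invariant under the flip with respect to x: Pr_V(σ) = Pr_V(F(σ,x)). -/
/-- The `V`-prefix of a tuple: the maximal initial segment of blocks each
contained in `V`. -/
def prefV {n : ℕ} (V : Finset (Fin n)) (l : List (Finset (Fin n))) :
    List (Finset (Fin n)) :=
  l.takeWhile fun A => decide (A ⊆ V)

/-!
The flip at `x` leaves every block before the one containing `x` untouched, and the first block
it does change again contains `x`. Since `x ∉ V`, the `V`-prefix stops before that block both in
`σ` and in `F(σ, x)`.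
-/

section

variable {n : ℕ}

theorem prefV_cons_of_subset {V A : Finset (Fin n)} (l : List (Finset (Fin n))) (h : A ⊆ V) :
    prefV V (A :: l) = A :: prefV V l := by
  simp [prefV, h]

theorem prefV_cons_of_not_subset {V A : Finset (Fin n)} (l : List (Finset (Fin n)))
    (h : ¬ A ⊆ V) : prefV V (A :: l) = [] := by
  simp [prefV, h]

theorem cflip_cons_of_notMem_s3 {x : Fin n} {A : Finset (Fin n)} (l : List (Finset (Fin n)))
    (h : x ∉ A) : cflip x (A :: l) = A :: cflip x l := by
  simp [cflip, h]

theorem exists_cflip_cons_eq_of_mem {x : Fin n} {A : Finset (Fin n)} (l : List (Finset (Fin n)))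
    (h : x ∈ A) : ∃ B l', x ∈ B ∧ cflip x (A :: l) = B :: l' := by
  by_cases hcard : 2 ≤ A.card
  · exact ⟨{x}, A.erase x :: l, Finset.mem_singleton_self x, by simp [cflip, h, hcard]⟩
  · cases l with
    | nil => exact ⟨A, [], h, by simp [cflip, h, hcard]⟩
    | cons B l' => exact ⟨insert x B, l', Finset.mem_insert_self x B, by simp [cflip, h, hcard]⟩

theorem prefV_cflip {V : Finset (Fin n)} {x : Fin n} (hxV : x ∉ V) :
    ∀ l : List (Finset (Fin n)), prefV V (cflip x l) = prefV V l
  | [] => rfl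
  | A :: l => by
    by_cases hxA : x ∈ A
    · obtain ⟨B, l', hxB, hflip⟩ := exists_cflip_cons_eq_of_mem l hxA
      rw [hflip, prefV_cons_of_not_subset l' (fun hB => hxV (hB hxB)),
        prefV_cons_of_not_subset l (fun hA => hxV (hA hxA))]
    · rw [cflip_cons_of_notMem_s3 l hxA]
      by_cases hAV : A ⊆ V
      · rw [prefV_cons_of_subset _ hAV, prefV_cons_of_subset _ hAV, prefV_cflip hxV l]
      · rw [prefV_cons_of_not_subset _ hAV, prefV_cons_of_not_subset _ hAV]

end

theorem prefV_flip_general (n : ℕ) (V : Finset (Fin n)) (l : List (Finset (Fin n)))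
    (x : Fin n) (hxV : x ∉ V) :
    prefV V l = prefV V (cflip x l) :=
  (prefV_cflip hxV l).symm

/-- Flipping with respect to an element `x ∉ V` does not change the `V`-prefix. -/
theorem prefV_flip (n : ℕ) (V : Finset (Fin n)) (l : List (Finset (Fin n)))
    (x : Fin n) (hl : IsFullTuple n l) (hx : x ∈ flippable n l) (hxV : x ∉ V) :
    prefV V l = prefV V (cflip x l) :=
  prefV_flip_general n V l x hxV
end

section
/- Let V be a nonempty subset of [n], R = (x_1,...,x_d) an order on [n]\V, and Ω a family of V-tuples. The standard matching μ_R restricts to a partial matching on Γ_n(Ω,V) whose critical vertices are exactly those of the form A_1|...|A_k|{x_1}|...|{x_d} where A_1|...|A_k is a full V-tuple belonging to Ω. In particular, if Ω contains no full V-tuple, then μ_R is a perfect matching on Γ_n(Ω,V). -/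
/-- Auxiliary function, operating on the reversed order `R` and the reversed
tuple: returns the element `x_h` where `h` is the height (the first element of
`R`, read from the end, at which the tuple stops matching the suffix of
singletons `{x_{h+1}}|...|{x_d}`), or `none` if the height is `0`. -/
def heightElemRev {n : ℕ} : List (Fin n) → List (Finset (Fin n)) → Option (Fin n)
  | [], _ => none
  | x :: _, [] => some x
  | x :: xs, A :: As => if A = {x} then heightElemRev xs As else some x

/-- For an order `R = (x_1,...,x_d)` and a tuple `σ`, `heightElem R σ` is the
element `x_h` with `h = h_R(σ)` when `h_R(σ) ≠ 0`, and `none` when `h_R(σ) = 0`.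
The standard matching `μ_R` sends `σ` to `F(σ, heightElem R σ)`. -/
def heightElem {n : ℕ} (R : List (Fin n)) (l : List (Finset (Fin n))) :
    Option (Fin n) :=
  heightElemRev R.reverse l.reverse

/-!
The height element `x_h` lies outside `V`, so flipping it only changes blocks after the
`V`-prefix, and the matching stays inside `Γ_n(Ω,V)`. Height `0` means the tuple ends with
`{x_1}|...|{x_d}`; since these singletons cover `[n] \ V`, the blocks before them form a full
`V`-tuple, which is then exactly the `V`-prefix and hence lies in `Ω`.
-/

section FoldrUnion

variable {α : Type*} [DecidableEq α]

lemma mem_foldr_union {a : α} {l : List (Finset α)} :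
    a ∈ l.foldr (· ∪ ·) ∅ ↔ ∃ A ∈ l, a ∈ A := by
  induction l with
  | nil => simp
  | cons B l ih => simp [ih]

lemma foldr_union_map_singleton (R : List α) :
    (R.map fun x => ({x} : Finset α)).foldr (· ∪ ·) ∅ = R.toFinset := by
  ext a
  simp [mem_foldr_union]

lemma foldr_union_eq_compl_of_append [Fintype α] {p q : List (Finset α)}
    (hdisj : (p ++ q).Pairwise Disjoint) (hcover : (p ++ q).foldr (· ∪ ·) ∅ = Finset.univ) :
    p.foldr (· ∪ ·) ∅ = (q.foldr (· ∪ ·) ∅)ᶜ := by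
  ext a
  simp only [Finset.mem_compl, mem_foldr_union]
  constructor
  · rintro ⟨A, hA, haA⟩ ⟨B, hB, haB⟩
    exact Finset.disjoint_left.mp ((List.pairwise_append.mp hdisj).2.2 A hA B hB) haA haB
  · intro haq
    have ha : a ∈ (p ++ q).foldr (· ∪ ·) ∅ := hcover ▸ Finset.mem_univ a
    obtain ⟨A, hA, haA⟩ := mem_foldr_union.mp ha
    rcases List.mem_append.mp hA with hA | hA
    · exact ⟨A, hA, haA⟩
    · exact absurd ⟨A, hA, haA⟩ haq

end FoldrUnion

section Height

variable {n : ℕ}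

lemma heightElemRev_eq_none_iff (xs : List (Fin n)) (As : List (Finset (Fin n))) :
    heightElemRev xs As = none ↔ xs.map (fun x => ({x} : Finset (Fin n))) <+: As := by
  induction xs generalizing As with
  | nil => simp [heightElemRev]
  | cons x xs ih =>
    cases As with
    | nil => simp [heightElemRev]
    | cons A As =>
      by_cases h : A = {x}
      · simp [heightElemRev, h, ih As, List.cons_prefix_cons]
      · simp [heightElemRev, h, List.cons_prefix_cons, Ne.symm h]

lemma mem_of_heightElemRev_eq_some {xs : List (Fin n)} {As : List (Finset (Fin n))}
    {x : Fin n} (h : heightElemRev xs As = some x) : x ∈ xs := by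
  induction xs generalizing As with
  | nil => simp [heightElemRev] at h
  | cons y xs ih =>
    cases As with
    | nil => simp_all [heightElemRev]
    | cons A As =>
      by_cases hA : A = {y}
      · simp only [heightElemRev, hA, if_true] at h
        exact List.mem_cons_of_mem _ (ih h)
      · simp_all [heightElemRev]

lemma heightElem_eq_none_iff (R : List (Fin n)) (l : List (Finset (Fin n))) :
    heightElem R l = none ↔ ∃ p, l = p ++ R.map fun x => ({x} : Finset (Fin n)) := by
  rw [heightElem, heightElemRev_eq_none_iff, List.map_reverse, List.reverse_prefix]
  exact ⟨fun ⟨p, hp⟩ => ⟨p, hp.symm⟩, fun ⟨p, hp⟩ => ⟨p, hp.symm⟩⟩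

lemma mem_of_heightElem_eq_some {R : List (Fin n)} {l : List (Finset (Fin n))} {x : Fin n}
    (h : heightElem R l = some x) : x ∈ R :=
  List.mem_reverse.mp (mem_of_heightElemRev_eq_some h)

end Height

section Prefix

variable {n : ℕ} {V : Finset (Fin n)}

/-- Flipping an element outside `V` only touches blocks that meet `[n] \ V`, so it cannot
change the `V`-prefix. -/
lemma prefV_cflip_of_not_mem {x : Fin n} (hx : x ∉ V) (l : List (Finset (Fin n))) :
    prefV V (cflip x l) = prefV V l := by
  unfold prefV
  induction l with
  | nil => simp [cflip]
  | cons A rest ih =>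
    by_cases hA : x ∈ A
    · have hAV : ¬ A ⊆ V := fun h => hx (h hA)
      by_cases h2 : 2 ≤ A.card
      · simp [cflip, hA, h2, hAV, hx]
      · cases rest with
        | nil => simp [cflip, hA, h2]
        | cons B rest' =>
          have hxB : ¬ insert x B ⊆ V := fun h => hx (h (Finset.mem_insert_self _ _))
          simp [cflip, hA, h2, hAV, hxB]
    · by_cases hAV : A ⊆ V
      · simp [cflip, hA, hAV, ih]
      · simp [cflip, hA, hAV]

lemma prefV_append_map_singleton {p : List (Finset (Fin n))} {R : List (Fin n)}
    (hp : ∀ A ∈ p, A ⊆ V) (hR : ∀ x ∈ R, x ∉ V) :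
    prefV V (p ++ R.map fun x => ({x} : Finset (Fin n))) = p := by
  rw [prefV, List.takeWhile_append_of_pos (by simpa using hp)]
  cases R with
  | nil => simp
  | cons x R => simp [hR x List.mem_cons_self]

lemma foldr_union_eq_and_prefV_eq_of_isFullTuple {R : List (Fin n)}
    (hR : ∀ x : Fin n, x ∈ R ↔ x ∉ V) {p : List (Finset (Fin n))}
    (hl : IsFullTuple n (p ++ R.map fun x => ({x} : Finset (Fin n)))) :
    p.foldr (· ∪ ·) ∅ = V ∧ prefV V (p ++ R.map fun x => ({x} : Finset (Fin n))) = p := by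
  obtain ⟨-, hdisj, hcover⟩ := hl
  have hpV : p.foldr (· ∪ ·) ∅ = V := by
    rw [foldr_union_eq_compl_of_append hdisj hcover, foldr_union_map_singleton]
    ext y
    simp [hR y]
  refine ⟨hpV, prefV_append_map_singleton ?_ fun x hx => (hR x).mp hx⟩
  intro A hA y hy
  exact hpV ▸ mem_foldr_union.mpr ⟨A, hA, hy⟩

end Prefix

theorem standard_matching_on_GnOmegaV_general (n : ℕ) (V : Finset (Fin n))
    (R : List (Fin n))
    (hR : ∀ x : Fin n, x ∈ R ↔ x ∉ V) (Ω : Set (List (Finset (Fin n))))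
    (l : List (Finset (Fin n))) (hl : IsFullTuple n l) (hlΩ : prefV V l ∈ Ω) :
    (∀ xh : Fin n, heightElem R l = some xh → prefV V (cflip xh l) ∈ Ω) ∧
    (heightElem R l = none ↔
      ∃ p ∈ Ω, p.foldr (· ∪ ·) ∅ = V ∧
        l = p ++ R.map (fun x => ({x} : Finset (Fin n)))) ∧
    ((∀ p ∈ Ω, p.foldr (· ∪ ·) ∅ ≠ V) → heightElem R l ≠ none) := by
  have hcritical : heightElem R l = none ↔
      ∃ p ∈ Ω, p.foldr (· ∪ ·) ∅ = V ∧ l = p ++ R.map (fun x => ({x} : Finset (Fin n))) := by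
    rw [heightElem_eq_none_iff]
    constructor
    · rintro ⟨p, rfl⟩
      obtain ⟨hpV, hpref⟩ := foldr_union_eq_and_prefV_eq_of_isFullTuple hR hl
      exact ⟨p, hpref ▸ hlΩ, hpV, rfl⟩
    · rintro ⟨p, -, -, hp⟩
      exact ⟨p, hp⟩
  refine ⟨fun xh h => ?_, hcritical, fun hnoFull hnone => ?_⟩
  · rw [prefV_cflip_of_not_mem ((hR xh).mp (mem_of_heightElem_eq_some h))]
    exact hlΩ
  · obtain ⟨p, hpΩ, hpV, -⟩ := hcritical.mp hnone
    exact hnoFull p hpΩ hpV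

/-- Let `V ⊆ [n]` be nonempty, `R = (x_1,...,x_d)` an order on `[n] \ V`, and
`Ω` a family of `V`-tuples. The standard matching `μ_R` restricts to a partial
matching on `Γ_n(Ω,V)` (the subgraph induced by full tuples whose `V`-prefix
lies in `Ω`), and its critical vertices are exactly those of the form
`A_1|...|A_k|{x_1}|...|{x_d}` where `A_1|...|A_k` is a full `V`-tuple in `Ω`.
In particular, if `Ω` has no full `V`-tuples, `μ_R` is perfect on `Γ_n(Ω,V)`. -/
theorem standard_matching_on_GnOmegaV (n : ℕ) (V : Finset (Fin n))
    (hV : V.Nonempty) (R : List (Fin n)) (hnd : R.Nodup)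
    (hR : ∀ x : Fin n, x ∈ R ↔ x ∉ V) (Ω : Set (List (Finset (Fin n))))
    (l : List (Finset (Fin n))) (hl : IsFullTuple n l) (hlΩ : prefV V l ∈ Ω) :
    (∀ xh : Fin n, heightElem R l = some xh → prefV V (cflip xh l) ∈ Ω) ∧
    (heightElem R l = none ↔
      ∃ p ∈ Ω, p.foldr (· ∪ ·) ∅ = V ∧
        l = p ++ R.map (fun x => ({x} : Finset (Fin n)))) ∧
    ((∀ p ∈ Ω, p.foldr (· ∪ ·) ∅ ≠ V) → heightElem R l ≠ none) :=
  standard_matching_on_GnOmegaV_general n V R hR Ω l hl hlΩ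
end

section
/- For every p ≥ 3, the family ⟨1[10]^*⟩ of subsets of [2p] decomposes as the disjoint union ⟨11[01]^*⟩ ⊔ ⟨1[10]^*10[01]^*⟩ ⊔ ⟨00[10]^*01[01]^*⟩ ⊔ {[10]^k [01]^{p-k} : 0 ≤ k ≤ p-1}. -/
/-!
Read an even-length word two letters at a time from the left. Whether `u ++ [x, y]` lies in
`⟨1[10]^*⟩` and in each of the six families `⟨11[01]^*⟩`, `⟨1[10]^*10[01]^*⟩`,
`⟨00[10]^*01[01]^*⟩`, `⟨00[10]^*⟩`, `{[10]^k [01]^(j+1)}`, `{[10]^k}` depends only on the block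
`xy` and on the same memberships of `u`, so the six families are the states of a finite automaton.
By induction on the number of blocks, every even-length word lies in exactly one of the six
families, and it lies in `⟨1[10]^*⟩` iff that family is neither `⟨00[10]^*⟩` nor `{[10]^k}`.
Among words of length `2p ≥ 2`, `{[10]^k [01]^(j+1)}` is the last family of the statement.
-/

/-- `k` concatenated copies of the binary string `γ`. -/
def reps (γ : List Bool) (k : ℕ) : List Bool := (List.replicate k γ).flatten

/-- The support vector `v` ends (on the right) with the string `β`. -/
def EndsWith (v β : List Bool) : Prop := ∃ γ : List Bool, v = γ ++ β

/-- The four alternatives are pairwise disjoint. -/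
def PairwiseDisjoint4 (A B C D : Prop) : Prop :=
  ¬(A ∧ B) ∧ ¬(A ∧ C) ∧ ¬(A ∧ D) ∧ ¬(B ∧ C) ∧ ¬(B ∧ D) ∧ ¬(C ∧ D)

theorem reps_succ (γ : List Bool) (k : ℕ) : reps γ (k + 1) = reps γ k ++ γ := by
  simp [reps, List.replicate_succ']

theorem length_reps (γ : List Bool) (k : ℕ) : (reps γ k).length = k * γ.length := by
  simp [reps]

section
variable {u c t γ : List Bool}

theorem append_eq_append_iff_of_length_eq (hc : c.length = γ.length := by rfl) :
    u ++ c = t ++ γ ↔ u = t ∧ c = γ :=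
  ⟨fun h => List.append_inj' h hc, fun ⟨hu, hc⟩ => hu ▸ hc ▸ rfl⟩

theorem endsWith_append_iff (hc : c.length = γ.length := by rfl) :
    EndsWith (u ++ c) (t ++ γ) ↔ EndsWith u t ∧ c = γ := by
  simp only [EndsWith, ← List.append_assoc, append_eq_append_iff_of_length_eq hc, exists_and_right]

theorem endsWith_append_iff_eq (hc : c.length = γ.length := by rfl) :
    EndsWith (u ++ c) γ ↔ c = γ := by
  simpa [show EndsWith u [] from ⟨u, by simp⟩] using endsWith_append_iff (u := u) (t := []) hc

theorem exists_endsWith_append_reps_iff (hc : c.length = γ.length := by rfl) :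
    (∃ k, EndsWith (u ++ c) (t ++ reps γ k)) ↔
      EndsWith (u ++ c) t ∨ c = γ ∧ ∃ k, EndsWith u (t ++ reps γ k) := by
  rw [← Nat.or_exists_add_one]
  simp only [reps_succ, ← List.append_assoc, endsWith_append_iff hc, and_comm]
  simp [reps]

theorem exists_append_eq_reps_iff (hc : c.length = γ.length := by rfl) :
    (∃ k, u ++ c = reps γ k) ↔ c = γ ∧ ∃ k, u = reps γ k := by
  refine ⟨fun ⟨k, h⟩ => ?_, fun ⟨hcγ, k, hu⟩ => ⟨k + 1, by rw [reps_succ, hu, hcγ]⟩⟩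
  cases k with
  | zero =>
    obtain ⟨rfl, rfl⟩ := List.append_eq_nil_iff.mp h
    exact ⟨(List.length_eq_zero_iff.mp hc.symm).symm, 0, rfl⟩
  | succ k =>
    rw [reps_succ, append_eq_append_iff_of_length_eq hc] at h
    exact ⟨h.2, k, h.1⟩

end

@[elab_as_elim]
theorem pair_induction {α : Type*} {P : List α → Prop} {n : ℕ} (v : List α)
    (hv : v.length = 2 * n) (nil : P []) (append_pair : ∀ u x y, P u → P (u ++ [x, y])) : P v := by
  induction n generalizing v with
  | zero => rwa [List.length_eq_zero_iff.mp hv]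
  | succ n ih =>
    obtain ⟨x, y, hxy⟩ :=
      List.length_eq_two.mp (by simp [hv, mul_add] : (v.drop (2 * n)).length = 2)
    rw [← List.take_append_drop (2 * n) v, hxy]
    exact append_pair _ x y (ih _ (by simp [hv]))

def Tail1 (v : List Bool) : Prop := ∃ k, EndsWith v ([true] ++ reps [true, false] k)

inductive Shape
  | tail11
  | tail1_10
  | tail00_01
  | tail00
  | staircase
  | alternating

namespace Shape

def Holds : Shape → List Bool → Prop
  | tail11, v => ∃ k, EndsWith v ([true, true] ++ reps [false, true] k)
  | tail1_10, v => ∃ m k, EndsWith v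
      ([true] ++ reps [true, false] m ++ [true, false] ++ reps [false, true] k)
  | tail00_01, v => ∃ m k, EndsWith v
      ([false, false] ++ reps [true, false] m ++ [false, true] ++ reps [false, true] k)
  | tail00, v => ∃ m, EndsWith v ([false, false] ++ reps [true, false] m)
  | staircase, v => ∃ k j, v = reps [true, false] k ++ reps [false, true] (j + 1)
  | alternating, v => ∃ k, v = reps [true, false] k

def next : Shape → Bool → Bool → Shape
  | _, false, false => tail00
  | _, true, true => tail11
  | tail00, false, true => tail00_01
  | alternating, false, true => staircase
  | s, false, true => s
  | tail00, true, false => tail00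
  | alternating, true, false => alternating
  | _, true, false => tail1_10

variable {u : List Bool} {x y : Bool}

theorem tail1_append_pair :
    Tail1 (u ++ [x, y]) ↔ y = true ∨ [x, y] = [true, false] ∧ Tail1 u := by
  rw [Tail1, exists_endsWith_append_reps_iff, List.append_cons u x [y],
    endsWith_append_iff_eq, List.cons.injEq, and_iff_left rfl]
  rfl

theorem holds_tail11_append_pair : tail11.Holds (u ++ [x, y]) ↔
    [x, y] = [true, true] ∨ [x, y] = [false, true] ∧ tail11.Holds u := by
  rw [Holds, exists_endsWith_append_reps_iff, endsWith_append_iff_eq]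
  rfl

theorem holds_tail1_10_append_pair : tail1_10.Holds (u ++ [x, y]) ↔
    [x, y] = [true, false] ∧ Tail1 u ∨ [x, y] = [false, true] ∧ tail1_10.Holds u := by
  simp only [Holds, exists_endsWith_append_reps_iff, endsWith_append_iff, exists_or,
    exists_and_left, exists_and_right, List.length_cons, List.length_nil, Tail1]
  rw [and_comm]

theorem holds_tail00_01_append_pair : tail00_01.Holds (u ++ [x, y]) ↔
    [x, y] = [false, true] ∧ (tail00.Holds u ∨ tail00_01.Holds u) := by
  simp only [Holds, exists_endsWith_append_reps_iff, endsWith_append_iff, exists_or,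
    exists_and_left, exists_and_right, List.length_cons, List.length_nil]
  rw [and_comm, ← and_or_left]

theorem holds_tail00_append_pair : tail00.Holds (u ++ [x, y]) ↔
    [x, y] = [false, false] ∨ [x, y] = [true, false] ∧ tail00.Holds u := by
  rw [Holds, exists_endsWith_append_reps_iff, endsWith_append_iff_eq]
  rfl

theorem holds_staircase_append_pair : staircase.Holds (u ++ [x, y]) ↔
    [x, y] = [false, true] ∧ (staircase.Holds u ∨ alternating.Holds u) := by
  have drop_last_block (k j : ℕ) :
      u ++ [x, y] = reps [true, false] k ++ reps [false, true] (j + 1) ↔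
        u = reps [true, false] k ++ reps [false, true] j ∧ [x, y] = [false, true] := by
    rw [reps_succ, ← List.append_assoc, append_eq_append_iff_of_length_eq]
  simp only [Holds, drop_last_block, exists_and_right]
  rw [and_comm, exists_congr fun k => Nat.or_exists_add_one.symm, exists_or, or_comm]
  simp [reps]

theorem holds_alternating_append_pair : alternating.Holds (u ++ [x, y]) ↔
    [x, y] = [true, false] ∧ alternating.Holds u :=
  exists_append_eq_reps_iff

theorem holds_nil (t : Shape) : t.Holds [] ↔ t = alternating := by
  cases t <;> simp [Holds, EndsWith, reps]

theorem not_tail1_nil : ¬Tail1 [] := by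
  simp [Tail1, EndsWith]

theorem holds_append_pair {s : Shape} (hs : ∀ t : Shape, t.Holds u ↔ t = s)
    (h1 : Tail1 u ↔ s ≠ tail00 ∧ s ≠ alternating) (x y : Bool) :
    (∀ t : Shape, t.Holds (u ++ [x, y]) ↔ t = s.next x y) ∧
      (Tail1 (u ++ [x, y]) ↔ s.next x y ≠ tail00 ∧ s.next x y ≠ alternating) := by
  refine ⟨fun t => ?_, ?_⟩
  · cases t <;>
      simp only [holds_tail11_append_pair, holds_tail1_10_append_pair, holds_tail00_01_append_pair,
        holds_tail00_append_pair, holds_staircase_append_pair, holds_alternating_append_pair,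
        hs, h1] <;>
      cases s <;> cases x <;> cases y <;> simp [next]
  · rw [tail1_append_pair, h1]
    cases s <;> cases x <;> cases y <;> simp [next]

theorem exists_shape {p : ℕ} {v : List Bool} (hv : v.length = 2 * p) :
    ∃ s : Shape, (∀ t : Shape, t.Holds v ↔ t = s) ∧ (Tail1 v ↔ s ≠ tail00 ∧ s ≠ alternating) :=
  pair_induction v hv ⟨alternating, holds_nil, by simp [not_tail1_nil]⟩
    fun _ x y ⟨s, hs, h1⟩ => ⟨s.next x y, holds_append_pair hs h1 x y⟩

theorem holds_staircase_iff {p : ℕ} {v : List Bool} (hv : v.length = 2 * p) (hp : 1 ≤ p) :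
    staircase.Holds v ↔ ∃ k ≤ p - 1, v = reps [true, false] k ++ reps [false, true] (p - k) := by
  constructor
  · rintro ⟨k, j, rfl⟩
    simp only [List.length_append, length_reps, List.length_cons, List.length_nil] at hv
    exact ⟨k, by omega, by rw [show p - k = j + 1 by omega]⟩
  · rintro ⟨k, hk, rfl⟩
    exact ⟨k, p - k - 1, by rw [show p - k - 1 + 1 = p - k by omega]⟩

end Shape

/-- For every `p ≥ 3`, the family `⟨1[10]^*⟩` of subsets of `[2p]` decomposes as
the disjoint union
`⟨11[01]^*⟩ ⊔ ⟨1[10]^*10[01]^*⟩ ⊔ ⟨00[10]^*01[01]^*⟩ ⊔ {[10]^k [01]^{p-k} : 0 ≤ k ≤ p-1}`. -/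
theorem decomposition_110 (p : ℕ) (hp : 3 ≤ p) (v : List Bool)
    (hv : v.length = 2 * p) :
    ((∃ k, EndsWith v ([true] ++ reps [true, false] k)) ↔
      ((∃ k, EndsWith v ([true, true] ++ reps [false, true] k)) ∨
       (∃ m k, EndsWith v
          ([true] ++ reps [true, false] m ++ [true, false] ++ reps [false, true] k)) ∨
       (∃ m k, EndsWith v
          ([false, false] ++ reps [true, false] m ++ [false, true] ++ reps [false, true] k)) ∨
       (∃ k ≤ p - 1, v = reps [true, false] k ++ reps [false, true] (p - k)))) ∧
    PairwiseDisjoint4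
      (∃ k, EndsWith v ([true, true] ++ reps [false, true] k))
      (∃ m k, EndsWith v
        ([true] ++ reps [true, false] m ++ [true, false] ++ reps [false, true] k))
      (∃ m k, EndsWith v
        ([false, false] ++ reps [true, false] m ++ [false, true] ++ reps [false, true] k))
      (∃ k ≤ p - 1, v = reps [true, false] k ++ reps [false, true] (p - k)) := by
  obtain ⟨s, hs, htail1⟩ := Shape.exists_shape hv
  have h11 := hs .tail11
  have h1_10 := hs .tail1_10
  have h00_01 := hs .tail00_01
  have hstair := (Shape.holds_staircase_iff hv (by omega)).symm.trans (hs .staircase)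
  simp only [Shape.Holds] at h11 h1_10 h00_01
  simp only [Tail1] at htail1
  rw [htail1, h11, h1_10, h00_01, hstair]
  cases s <;> simp [PairwiseDisjoint4]
end
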